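/- With D a codimension-one integrable distribution with constraint form θ and transversal N as above, the map X ↦ A_X*θ restricted to D is C^∞(M)-linear in X (even though for a general 1-form φ, X ↦ A_X*φ is not function-linear), so that θ∘A defines a tensorial analogue of g∘s (metric composed with the shape operator). -/
import Mathlib


/- Abstract framework: `L` is the Lie ring of vector fields on the manifold `M`,
`R` is the commutative ring of smooth functions `C^infty(M)`, over which `L` is a
module; `act X f` is the directional derivative `X f` of a function by a vector
field. -/

variable {R : Type*} [CommRing R] {L : Type*} [LieRing L] [Module R L]

/-- Torsion of a linear connection `D`: `T(X,Y) = del_X Y - del_Y X - [X,Y]`. -/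
def torsion (D : L -> L -> L) (X Y : L) : L := D X Y - D Y X - ⁅X, Y⁆

/-- The shape map `A_X(Y) = del_X Y - [X,Y]` (equal to `del_Y X + T(X,Y)`). -/
def shape (D : L -> L -> L) (X Y : L) : L := D X Y - ⁅X, Y⁆

/-- `D` is a linear connection on vector fields: additive and `C^infty`-linear in
its first slot, additive and satisfying the Leibniz rule in its second slot. -/
structure IsConnection (act : L -> R -> R) (D : L -> L -> L) : Prop where
  add_left : ∀ X X' Y : L, D (X + X') Y = D X Y + D X' Y
  smul_left : ∀ (f : R) (X Y : L), D (f • X) Y = f • D X Y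
  add_right : ∀ X Y Y' : L, D X (Y + Y') = D X Y + D X Y'
  leibniz : ∀ (f : R) (X Y : L), D X (f • Y) = act X f • Y + f • D X Y

/-- on sections of the codimension-one integrable distribution
`D = ker θ`, the map `X ↦ A_X*θ` (with `A_X*θ(Y) = θ(A_X Y)`) is
`C^infty(M)`-linear in `X`. -/
theorem stmt13 (act : L -> R -> R) (D : L -> L -> L) (hD : IsConnection act D)
    (hbr : ∀ (f : R) (X Y : L), ⁅X, f • Y⁆ = act X f • Y + f • ⁅X, Y⁆)
    (θ : L →ₗ[R] R)
    (hFrob : ∀ X Y : L, θ X = 0 -> θ Y = 0 -> θ ⁅X, Y⁆ = 0)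
    (N : L) (hN : θ N = 1) :
    (∀ (f : R), ∀ X Y : L, θ X = 0 -> θ Y = 0 ->
        θ (shape D (f • X) Y) = f * θ (shape D X Y)) ∧
    (∀ X X' Y : L, θ X = 0 -> θ X' = 0 -> θ Y = 0 ->
        θ (shape D (X + X') Y) = θ (shape D X Y) + θ (shape D X' Y)) := by
  constructor
  · intro f X Y hX hY
    have hlie : ⁅f • X, Y⁆ = -(act Y f) • X + f • ⁅X, Y⁆ := by
      have : ⁅Y, f • X⁆ = act Y f • X + f • ⁅Y, X⁆ := hbr f Y X
      rw [← neg_neg ⁅f • X, Y⁆, ← lie_skew, this]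
      rw [neg_smul, ← lie_skew X Y]; module
    simp only [shape, hD.smul_left, hlie, map_sub, map_add, map_smul, hX,
      smul_eq_mul, mul_zero, neg_zero, zero_add]
    ring
  · intro X X' Y hX hX' hY
    simp only [shape, hD.add_left, add_lie, map_sub, map_add]
    ring
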